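/- arXiv:1509.06255 — 4 statements merged into one kernel-verified Lean document; each statement's English description precedes it below -/
import Mathlib

section
/- Let u₀, 𝒜 ∈ ℝ, ε ∈ (0, 1) and r₀ > 0. Suppose u, f : [r₀, ∞) → ℝ satisfy u(r) = 1 + u₀/r + O(r^{−2+ε}) and f′(r) = r/√(1 + r²) + 𝒜/r + O(r^{−2+ε}) as r → ∞, and suppose V : [r₀, ∞) → ℝ satisfies V(r) = O(r^{ε}) as r → ∞. Then [1 + u(r)²((1 + r²) f′(r)² + V(r))]^{−1/2} = 1/r − (u₀ + 𝒜)/r² + O(r^{−3+ε}) as r → ∞. -/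
/-! Put `g = 1 + u² ((1 + r²) f'² + V)` and `a = u₀ + 𝒜`. Multiplying out the expansions of `u`
and `f'` gives `g = r² + 2 a r + O(r^ε)`; the only non-obvious input is the identity
`(1 + r²) (r / √(1 + r²) + 𝒜 / r)² = r² + 2 𝒜 √(1 + r²) + 𝒜² (1 + r⁻²)`, whose right side is
`r² + 2 𝒜 r + O(1)`. For `h = 1/r - a/r²` one has
`1 - g h² = 3a²/r² - 2a³/r³ - (g - r² - 2ar) h² = O(r^(ε-2))`, and since
`|g^(-1/2) - h| ≤ |1 - g h²| / (g h)` with `g h ≥ r / 4` eventually, the error is `O(r^(ε-3))`. -/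

open Filter Asymptotics Real Topology

section RpowAtTop

variable {f : ℝ → ℝ} {p q : ℝ}

theorem isBigO_rpow_iff_exists_bound :
    f =O[atTop] (· ^ p) ↔ ∃ C R, ∀ r ≥ R, |f r| ≤ C * r ^ p := by
  rw [isBigO_iff]
  constructor
  · rintro ⟨C, hC⟩
    obtain ⟨R, hR⟩ := eventually_atTop.1 (hC.and (eventually_ge_atTop 0))
    refine ⟨C, R, fun r hr => ?_⟩
    have := (hR r hr).1
    rwa [norm_eq_abs, norm_eq_abs, abs_of_nonneg (rpow_nonneg (hR r hr).2 p)] at this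
  · rintro ⟨C, R, h⟩
    refine ⟨C, ?_⟩
    filter_upwards [eventually_ge_atTop R, eventually_ge_atTop 0] with r hR h0
    rw [norm_eq_abs, norm_eq_abs, abs_of_nonneg (rpow_nonneg h0 p)]
    exact h r hR

theorem isBigO_rpow_rpow_of_le (h : p ≤ q) : (· ^ p : ℝ → ℝ) =O[atTop] (· ^ q) :=
  Eventually.isBigO <| by
    filter_upwards [eventually_ge_atTop 1] with r hr
    rw [norm_of_nonneg (rpow_nonneg (zero_le_one.trans hr) p)]
    exact rpow_le_rpow_of_exponent_le hr h

theorem isLittleO_rpow_rpow_of_lt (h : p < q) : (· ^ p : ℝ → ℝ) =o[atTop] (· ^ q) := by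
  have hdecay : (fun r : ℝ => r ^ (-(q - p))) =o[atTop] (fun _ => (1 : ℝ)) :=
    (isLittleO_one_iff ℝ).2 (tendsto_rpow_neg_atTop (by linarith))
  refine (hdecay.mul_isBigO (isBigO_refl (· ^ q) atTop)).congr' ?_ ?_
  · filter_upwards [eventually_gt_atTop 0] with r hr
    rw [← rpow_add hr]
    ring_nf
  · simp

theorem Filter.Tendsto.isBigO_rpow_zero {c : ℝ} (h : Tendsto f atTop (𝓝 c)) :
    f =O[atTop] (· ^ (0 : ℝ)) := by
  simpa using h.isBigO_one ℝ

theorem isBigO_rpow_zero_of_abs_le {C : ℝ} (h : ∀ᶠ r in atTop, |f r| ≤ C) :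
    f =O[atTop] (· ^ (0 : ℝ)) :=
  .of_bound C <| by
    filter_upwards [h] with r hr
    simpa using hr

theorem isBigO_const_mul_pow (c : ℝ) (n : ℕ) :
    (fun r : ℝ => c * r ^ n) =O[atTop] (· ^ (n : ℝ)) :=
  (isBigO_const_mul_self c _ atTop).congr_left fun r => by rw [rpow_natCast]

theorem isBigO_const_div_pow (c : ℝ) (n : ℕ) :
    (fun r : ℝ => c / r ^ n) =O[atTop] (· ^ (-(n : ℝ))) := by
  refine (isBigO_const_mul_self c _ atTop).congr' ?_ EventuallyEq.rfl
  filter_upwards [eventually_ge_atTop 0] with r hr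
  rw [rpow_neg hr, rpow_natCast, div_eq_mul_inv]

end RpowAtTop

theorem sq_sub_isBigO_of_sub_isBigO {u : ℝ → ℝ} {c ε : ℝ} (hε₀ : 0 ≤ ε) (hε₂ : ε ≤ 2)
    (hu : (fun r => u r - (1 + c / r)) =O[atTop] (· ^ (-2 + ε))) :
    (fun r => u r ^ 2 - (1 + 2 * c / r)) =O[atTop] (· ^ (-2 + ε)) := by
  have hlead : (fun r : ℝ => 1 + c / r) =O[atTop] (· ^ (0 : ℝ)) :=
    (tendsto_const_nhds.add (tendsto_const_nhds.div_atTop tendsto_id)).isBigO_rpow_zero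
  have hsum : (fun r => u r + (1 + c / r)) =O[atTop] (· ^ (0 : ℝ)) :=
    ((hu.trans (isBigO_rpow_rpow_of_le (by linarith))).add (hlead.add hlead)).congr_left
      fun r => by ring
  have hprod := hu.mul_atTop_rpow_of_isBigO_rpow (-2 + ε) 0 (-2 + ε) hsum (by linarith)
  have hsq : (fun r : ℝ => c ^ 2 / r ^ 2) =O[atTop] (· ^ (-2 + ε)) :=
    (isBigO_const_div_pow _ 2).trans (isBigO_rpow_rpow_of_le (by push_cast; linarith))
  refine (hprod.add hsq).congr' ?_ EventuallyEq.rfl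
  filter_upwards [eventually_ne_atTop 0] with r hr
  simp only [Pi.mul_apply]
  field_simp
  ring

theorem one_add_sq_mul_sq_sub_isBigO {f' : ℝ → ℝ} {A ε : ℝ} (hε₀ : 0 ≤ ε) (hε₂ : ε ≤ 2)
    (hf' : (fun r => f' r - (r / √(1 + r ^ 2) + A / r)) =O[atTop] (· ^ (-2 + ε))) :
    (fun r => (1 + r ^ 2) * f' r ^ 2 - (r ^ 2 + 2 * A * r)) =O[atTop] (· ^ ε) := by
  set s : ℝ → ℝ := fun r => r / √(1 + r ^ 2) + A / r
  have hs : s =O[atTop] (· ^ (0 : ℝ)) := by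
    refine (isBigO_rpow_zero_of_abs_le (C := 1) (Eventually.of_forall fun r => ?_)).add
      (tendsto_const_nhds.div_atTop tendsto_id).isBigO_rpow_zero
    rw [abs_div, abs_of_nonneg (sqrt_nonneg _)]
    exact div_le_one_of_le₀ (abs_le_sqrt (by linarith [sq_nonneg r])) (sqrt_nonneg _)
  have hsum : (fun r => f' r + s r) =O[atTop] (· ^ (0 : ℝ)) :=
    ((hf'.trans (isBigO_rpow_rpow_of_le (by linarith))).add (hs.add hs)).congr_left
      fun r => by ring
  have hweight : (fun r : ℝ => 1 + r ^ 2) =O[atTop] (· ^ (2 : ℝ)) :=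
    (((isBigO_const_mul_pow 1 0).trans (isBigO_rpow_rpow_of_le (by norm_num))).add
      ((isBigO_const_mul_pow 1 2).trans (isBigO_rpow_rpow_of_le (by norm_num)))).congr_left
      fun r => by ring
  have hmain := hweight.mul_atTop_rpow_of_isBigO_rpow 2 (-2 + ε) ε
    (hf'.mul_atTop_rpow_of_isBigO_rpow (-2 + ε) 0 (-2 + ε) hsum (by linarith)) (by linarith)
  have hgap : (fun r => √(1 + r ^ 2) - r) =O[atTop] (· ^ (0 : ℝ)) := by
    refine isBigO_rpow_zero_of_abs_le (C := 1) ?_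
    filter_upwards [eventually_ge_atTop 0] with r hr
    have ht := sq_sqrt (by positivity : (0 : ℝ) ≤ 1 + r ^ 2)
    have ht0 := sqrt_nonneg (1 + r ^ 2)
    rw [abs_le]
    constructor <;> nlinarith
  have hlead : (fun r => (1 + r ^ 2) * s r ^ 2 - (r ^ 2 + 2 * A * r)) =O[atTop] (· ^ ε) := by
    have hbdd : (fun r => 2 * A * (√(1 + r ^ 2) - r) + A ^ 2 * (1 + 1 / r ^ 2))
        =O[atTop] (· ^ (0 : ℝ)) := ((isBigO_const_mul_self (2 * A) _ atTop).trans hgap).add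
      (tendsto_const_nhds.mul (tendsto_const_nhds.add
        (tendsto_const_nhds.div_atTop (tendsto_pow_atTop two_ne_zero)))).isBigO_rpow_zero
    refine (hbdd.trans (isBigO_rpow_rpow_of_le hε₀)).congr' ?_ EventuallyEq.rfl
    filter_upwards [eventually_gt_atTop 0] with r hr
    have ht := sq_sqrt (by positivity : (0 : ℝ) ≤ 1 + r ^ 2)
    have ht0 : 0 < √(1 + r ^ 2) := sqrt_pos.2 (by positivity)
    simp only [s]
    field_simp
    linear_combination (r ^ 4 + 2 * A * r ^ 2 * √(1 + r ^ 2)) * ht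
  refine (hmain.add hlead).congr_left fun r => ?_
  simp only [Pi.mul_apply]
  ring

theorem one_add_sq_mul_gradNormSq_sub_isBigO {u f' V : ℝ → ℝ} {u₀ A ε : ℝ}
    (hε₀ : 0 ≤ ε) (hε₂ : ε ≤ 2)
    (hu : (fun r => u r - (1 + u₀ / r)) =O[atTop] (· ^ (-2 + ε)))
    (hf' : (fun r => f' r - (r / √(1 + r ^ 2) + A / r)) =O[atTop] (· ^ (-2 + ε)))
    (hV : V =O[atTop] (· ^ ε)) :
    (fun r => 1 + u r ^ 2 * ((1 + r ^ 2) * f' r ^ 2 + V r) - (r ^ 2 + 2 * (u₀ + A) * r))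
      =O[atTop] (· ^ ε) := by
  have hu2 := sq_sub_isBigO_of_sub_isBigO hε₀ hε₂ hu
  have hW : (fun r => (1 + r ^ 2) * f' r ^ 2 + V r - (r ^ 2 + 2 * A * r)) =O[atTop] (· ^ ε) :=
    ((one_add_sq_mul_sq_sub_isBigO hε₀ hε₂ hf').add hV).congr_left fun r => by ring
  have hP : (fun r : ℝ => r ^ 2 + 2 * A * r) =O[atTop] (· ^ (2 : ℝ)) :=
    (((isBigO_const_mul_pow 1 2).trans (isBigO_rpow_rpow_of_le (by norm_num))).add
      ((isBigO_const_mul_pow (2 * A) 1).trans (isBigO_rpow_rpow_of_le (by norm_num)))).congr_left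
      fun r => by ring
  have hWbig : (fun r => (1 + r ^ 2) * f' r ^ 2 + V r) =O[atTop] (· ^ (2 : ℝ)) :=
    ((hW.trans (isBigO_rpow_rpow_of_le hε₂)).add hP).congr_left fun r => by ring
  have hq : (fun r : ℝ => 1 + 2 * u₀ / r) =O[atTop] (· ^ (0 : ℝ)) :=
    (tendsto_const_nhds.add (tendsto_const_nhds.div_atTop tendsto_id)).isBigO_rpow_zero
  have hconst : (fun _ : ℝ => 1 + 4 * u₀ * A) =O[atTop] (· ^ ε) :=
    tendsto_const_nhds.isBigO_rpow_zero.trans (isBigO_rpow_rpow_of_le hε₀)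
  refine ((hconst.add (hq.mul_atTop_rpow_of_isBigO_rpow 0 ε ε hW (by linarith))).add
    (hu2.mul_atTop_rpow_of_isBigO_rpow (-2 + ε) 2 ε hWbig (by linarith))).congr' ?_
    EventuallyEq.rfl
  filter_upwards [eventually_ne_atTop 0] with r hr
  simp only [Pi.mul_apply]
  field_simp
  ring

theorem abs_inv_sqrt_sub_le {g h : ℝ} (hg : 0 < g) (hh : 0 < h) :
    |(√g)⁻¹ - h| ≤ |1 - g * h ^ 2| / (g * h) := by
  have hx : 0 < (√g)⁻¹ := inv_pos.2 (sqrt_pos.2 hg)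
  have hx2 : g * ((√g)⁻¹) ^ 2 = 1 := by
    rw [inv_pow, sq_sqrt hg.le, mul_inv_cancel₀ hg.ne']
  have hsum : g * h ≤ g * ((√g)⁻¹ + h) := mul_le_mul_of_nonneg_left (by linarith) hg.le
  have hgh : 0 < g * h := mul_pos hg hh
  have hdiff : (√g)⁻¹ - h = (1 - g * h ^ 2) / (g * ((√g)⁻¹ + h)) := by
    rw [eq_div_iff (by linarith)]
    linear_combination hx2
  rw [hdiff, abs_div, abs_of_pos (hgh.trans_le hsum)]
  exact div_le_div_of_nonneg_left (abs_nonneg _) hgh hsum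

theorem inv_sqrt_sub_isBigO {g : ℝ → ℝ} {a ε : ℝ} (hε₀ : 0 ≤ ε) (hε₂ : ε < 2)
    (hg : (fun r => g r - (r ^ 2 + 2 * a * r)) =O[atTop] (· ^ ε)) :
    (fun r => (√(g r))⁻¹ - (1 / r - a / r ^ 2)) =O[atTop] (· ^ (-3 + ε)) := by
  set h : ℝ → ℝ := fun r => 1 / r - a / r ^ 2
  have hh : h =O[atTop] (· ^ (-1 : ℝ)) :=
    (((isBigO_const_div_pow 1 1).trans (isBigO_rpow_rpow_of_le (by norm_num))).sub
      ((isBigO_const_div_pow a 2).trans (isBigO_rpow_rpow_of_le (by norm_num)))).congr_left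
      fun r => by simp only [h, pow_one]
  have hdefect : (fun r => 1 - g r * h r ^ 2) =O[atTop] (· ^ (-2 + ε)) := by
    have hprod := hg.mul_atTop_rpow_of_isBigO_rpow ε (-2) (-2 + ε)
      (hh.mul_atTop_rpow_of_isBigO_rpow (-1) (-1) (-2) hh (by norm_num)) (by linarith)
    refine ((((isBigO_const_div_pow (3 * a ^ 2) 2).trans
      (isBigO_rpow_rpow_of_le (by push_cast; linarith))).sub
      ((isBigO_const_div_pow (2 * a ^ 3) 3).trans
      (isBigO_rpow_rpow_of_le (by push_cast; linarith)))).sub hprod).congr' ?_ EventuallyEq.rfl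
    filter_upwards [eventually_ne_atTop 0] with r hr
    simp only [h, Pi.mul_apply]
    field_simp
    ring
  have hg_lower : ∀ᶠ r in atTop, r ^ 2 / 2 ≤ g r := by
    have hlin : (fun r : ℝ => 2 * a * r) =O[atTop] (· ^ (1 : ℝ)) :=
      (isBigO_const_mul_pow (2 * a) 1).congr (fun r => by rw [pow_one]) fun r => by simp
    have ho : (fun r => g r - r ^ 2) =o[atTop] (· ^ (2 : ℝ)) :=
      ((hlin.trans_isLittleO (isLittleO_rpow_rpow_of_lt (by norm_num))).add
        (hg.trans_isLittleO (isLittleO_rpow_rpow_of_lt hε₂))).congr_left fun r => by ring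
    filter_upwards [ho.bound (by norm_num : (0 : ℝ) < 1 / 2)] with r hr
    rw [norm_eq_abs, norm_eq_abs, rpow_two, abs_of_nonneg (sq_nonneg r)] at hr
    linarith [neg_abs_le (g r - r ^ 2)]
  have hh_lower : ∀ᶠ r in atTop, 1 / (2 * r) ≤ h r := by
    filter_upwards [eventually_ge_atTop (2 * a), eventually_gt_atTop 0] with r ha hr
    have hdiff : h r - 1 / (2 * r) = (r - 2 * a) / (2 * r ^ 2) := by
      simp only [h]
      field_simp
      ring
    linarith [div_nonneg (by linarith : 0 ≤ r - 2 * a) (by positivity : (0 : ℝ) ≤ 2 * r ^ 2)]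
  refine (IsBigO.of_bound 4 ?_).trans (hdefect.mul_atTop_rpow_of_isBigO_rpow (-2 + ε) (-1)
    (-3 + ε) (isBigO_refl _ _) (by linarith))
  filter_upwards [hg_lower, hh_lower, eventually_gt_atTop 0] with r hgr hhr hr
  have hg0 : 0 < g r := lt_of_lt_of_le (by positivity) hgr
  have hh0 : 0 < h r := lt_of_lt_of_le (by positivity) hhr
  have hgh : r / 4 ≤ g r * h r :=
    calc r / 4 = r ^ 2 / 2 * (1 / (2 * r)) := by field_simp; ring
      _ ≤ g r * h r := mul_le_mul hgr hhr (by positivity) hg0.le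
  calc ‖(√(g r))⁻¹ - h r‖ ≤ |1 - g r * h r ^ 2| / (g r * h r) := abs_inv_sqrt_sub_le hg0 hh0
    _ ≤ |1 - g r * h r ^ 2| / (r / 4) :=
      div_le_div_of_nonneg_left (abs_nonneg _) (by positivity) hgh
    _ = 4 * ‖(1 - g r * h r ^ 2) * r ^ (-1 : ℝ)‖ := by
      rw [rpow_neg_one, norm_mul, norm_inv, norm_eq_abs, norm_eq_abs, abs_of_pos hr]
      field_simp

theorem stmt_6_general (u₀ 𝒜 ε : ℝ) (hε : ε ∈ Set.Ioo (0 : ℝ) 1)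
    (u f' V : ℝ → ℝ)
    (hu : ∃ C R, ∀ r ≥ R, |u r - (1 + u₀ / r)| ≤ C * r ^ (-2 + ε))
    (hf' : ∃ C R, ∀ r ≥ R,
      |f' r - (r / Real.sqrt (1 + r ^ 2) + 𝒜 / r)| ≤ C * r ^ (-2 + ε))
    (hV : ∃ C R, ∀ r ≥ R, |V r| ≤ C * r ^ ε) :
    ∃ C R, ∀ r ≥ R,
      |(Real.sqrt (1 + u r ^ 2 * ((1 + r ^ 2) * f' r ^ 2 + V r)))⁻¹ -
        (1 / r - (u₀ + 𝒜) / r ^ 2)| ≤ C * r ^ (-3 + ε) := by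
  obtain ⟨hε₀, hε₁⟩ := hε
  have hg := one_add_sq_mul_gradNormSq_sub_isBigO hε₀.le (by linarith)
    (isBigO_rpow_iff_exists_bound.2 hu) (isBigO_rpow_iff_exists_bound.2 hf')
    (isBigO_rpow_iff_exists_bound.2 hV)
  exact isBigO_rpow_iff_exists_bound.1 (inv_sqrt_sub_isBigO hε₀.le (by linarith) hg)

/-- Expansion of (1 + u²|∇f|²_g)^{−1/2} = 1/r − (u₀ + 𝒜)/r² + O(r^{−3+ε}),
where |∇f|²_g = (1 + r²) f′² + V with V = O(r^ε). -/
theorem stmt_6 (u₀ 𝒜 ε r₀ : ℝ) (hε : ε ∈ Set.Ioo (0 : ℝ) 1) (hr₀ : 0 < r₀)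
    (u f f' V : ℝ → ℝ)
    (hfd : ∀ r ≥ r₀, HasDerivAt f (f' r) r)
    (hu : ∃ C R, ∀ r ≥ R, |u r - (1 + u₀ / r)| ≤ C * r ^ (-2 + ε))
    (hf' : ∃ C R, ∀ r ≥ R,
      |f' r - (r / Real.sqrt (1 + r ^ 2) + 𝒜 / r)| ≤ C * r ^ (-2 + ε))
    (hV : ∃ C R, ∀ r ≥ R, |V r| ≤ C * r ^ ε) :
    ∃ C R, ∀ r ≥ R,
      |(Real.sqrt (1 + u r ^ 2 * ((1 + r ^ 2) * f' r ^ 2 + V r)))⁻¹ -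
        (1 / r - (u₀ + 𝒜) / r ^ 2)| ≤ C * r ^ (-3 + ε) :=
  stmt_6_general u₀ 𝒜 ε hε u f' V hu hf' hV
end

section
/- Let u₀, 𝒜, 𝐦 ∈ ℝ, ε ∈ (0, 1) and r₀ > 0. Suppose u, f : [r₀, ∞) → ℝ are twice differentiable with u(r) = 1 + u₀/r + O(r^{−2+ε}), u′(r) = −u₀/r² + O(r^{−3+ε}), f′(r) = r/√(1 + r²) + 𝒜/r + O(r^{−2+ε}), f″(r) = (1 + r²)^{−3/2} − 𝒜/r² + O(r^{−3+ε}) as r → ∞; suppose V : [r₀, ∞) → ℝ satisfies V(r) = O(r^{ε}); suppose G(r) = (1 + r²) − 𝐦/r + O(r^{−2}) and k(r) = (1 + r²)^{−1} + O(r^{−5}) as r → ∞. Define D(r) = [1 + u(r)²((1 + r²) f′(r)² + V(r))]^{1/2} and π(r) = [u(r)(f″(r) + (r/(1 + r²)) f′(r)) + 2 u′(r) f′(r)] / D(r). Then u(r) G(r) f′(r) √(1 + r²) D(r)^{−1} (π(r) − k(r)) = −(2u₀ + 𝒜)/r + O(r^{−2+ε}) as r → ∞. -/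
/-!
Write `s = √(1 + r²)` and `a = 𝒜 + u₀`. The hypotheses give `u s f' = r + a + O(r^{ε-1})`, so the
radicand `D² = 1 + (u s f')² + u² V` is `(r + a)² + O(r^ε)`; dividing `D² - (r + a)²` by
`D + r + a ≳ r` gives `D = r + a + O(r^{ε-1})`. The numerator of `π` is `1/r - u₀/r² + O(r^{ε-3})`,
so `π - k = -(2u₀ + 𝒜)/r³ + O(r^{ε-4})`, while the prefactor `G (u s f') / D` is `r² + O(r^ε)`.
-/

open Filter Asymptotics Real

namespace Asymptotics

theorem isBigO_rpow_atTop_iff_exists_bound {F : ℝ → ℝ} {p : ℝ} :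
    F =O[atTop] (· ^ p) ↔ ∃ C R, ∀ r ≥ R, |F r| ≤ C * r ^ p := by
  rw [isBigO_iff]
  refine ⟨fun ⟨C, hC⟩ => ?_, fun ⟨C, R, hC⟩ => ⟨C, ?_⟩⟩
  · obtain ⟨R, hR⟩ := eventually_atTop.1 (hC.and (eventually_ge_atTop 0))
    refine ⟨C, R, fun r hr => ?_⟩
    simpa [abs_of_nonneg (rpow_nonneg (hR r hr).2 p)] using (hR r hr).1
  · filter_upwards [eventually_ge_atTop R, eventually_ge_atTop 0] with r hr hr₀
    simpa [abs_of_nonneg (rpow_nonneg hr₀ p)] using hC r hr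

theorem IsBigO.trans_rpow_le {F : ℝ → ℝ} {p q : ℝ} (hF : F =O[atTop] (· ^ p))
    (hpq : p ≤ q) : F =O[atTop] (· ^ q) := by
  refine hF.trans (Eventually.isBigO ?_)
  filter_upwards [eventually_ge_atTop 1] with r hr
  rw [norm_of_nonneg (rpow_nonneg (zero_le_one.trans hr) p)]
  exact rpow_le_rpow_of_exponent_le hr hpq

theorem isBigO_inv_rpow_neg {E : ℝ → ℝ} {c p : ℝ} (hc : 0 < c)
    (hE : ∀ᶠ r in atTop, c * r ^ p ≤ E r) : (fun r => (E r)⁻¹) =O[atTop] (· ^ (-p)) := by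
  refine IsBigO.of_bound c⁻¹ ?_
  filter_upwards [hE, eventually_gt_atTop 0] with r hr hr₀
  have hpos : 0 < c * r ^ p := by positivity
  rw [norm_inv, norm_of_nonneg (hpos.trans_le hr).le, norm_of_nonneg (by positivity),
    rpow_neg hr₀.le, ← mul_inv]
  exact inv_anti₀ hpos hr

theorem isBigO_const_rpow (c : ℝ) {p : ℝ} (hp : 0 ≤ p) :
    (fun _ : ℝ => c) =O[atTop] (· ^ p) :=
  ((isBigO_const_one ℝ c atTop).congr_right fun r => (rpow_zero r).symm).trans_rpow_le hp

theorem isBigO_pow_rpow (n : ℕ) {p : ℝ} (hp : n ≤ p) :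
    (fun r : ℝ => r ^ n) =O[atTop] (· ^ p) :=
  (isBigO_refl (· ^ (n : ℝ)) atTop |>.congr_left fun r => rpow_natCast r n).trans_rpow_le hp

theorem isBigO_const_div_pow (c : ℝ) (n : ℕ) {p : ℝ} (hp : -(n : ℝ) ≤ p) :
    (fun r : ℝ => c / r ^ n) =O[atTop] (· ^ p) := by
  have : (fun r : ℝ => c / r ^ n) =O[atTop] (· ^ (-(n : ℝ))) :=
    (isBigO_const_mul_self c _ atTop).congr_left fun r => by
      rw [rpow_neg_natCast, zpow_neg, zpow_natCast, div_eq_mul_inv]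
  exact this.trans_rpow_le hp

theorem IsBigO.of_isBigO_sub {F H : ℝ → ℝ} {p q : ℝ}
    (hFH : (fun r => F r - H r) =O[atTop] (· ^ p)) (hH : H =O[atTop] (· ^ q)) (hpq : p ≤ q) :
    F =O[atTop] (· ^ q) :=
  ((hFH.trans_rpow_le hpq).add hH).congr_left fun r => sub_add_cancel (F r) (H r)

theorem isBigO_one_add_const_div (c : ℝ) :
    (fun r : ℝ => 1 + c / r) =O[atTop] (· ^ (0 : ℝ)) :=
  ((isBigO_const_rpow 1 le_rfl).add (isBigO_const_div_pow c 1 (by norm_num))).congr_left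
    fun r => by rw [pow_one]

theorem isBigO_id_add_const (c : ℝ) : (fun r : ℝ => r + c) =O[atTop] (· ^ (1 : ℝ)) :=
  ((isBigO_pow_rpow 1 (by norm_num)).add (isBigO_const_rpow c zero_le_one)).congr_left
    fun r => by rw [pow_one]

theorem eventually_half_le_sqrt {A : ℝ → ℝ}
    (hA : (fun r => A r - r ^ 2) =O[atTop] (· ^ (1 : ℝ))) : ∀ᶠ r in atTop, r / 2 ≤ √(A r) := by
  obtain ⟨C, hC⟩ := hA.bound
  filter_upwards [hC, eventually_ge_atTop (max 0 (2 * C))] with r hAr hr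
  have hr₀ : 0 ≤ r := le_of_max_le_left hr
  have hrC : 2 * C ≤ r := le_of_max_le_right hr
  rw [Real.norm_eq_abs, Real.norm_eq_abs, rpow_one, abs_of_nonneg hr₀] at hAr
  have : (r / 2) ^ 2 ≤ A r := by
    nlinarith [neg_abs_le (A r - r ^ 2), mul_le_mul_of_nonneg_right hrC hr₀]
  calc r / 2 = √((r / 2) ^ 2) := (sqrt_sq (by positivity)).symm
    _ ≤ √(A r) := sqrt_le_sqrt this

end Asymptotics

theorem sqrt_one_add_sq_sub_self (r : ℝ) : √(1 + r ^ 2) - r = (√(1 + r ^ 2) + r)⁻¹ := by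
  have hsq : √(1 + r ^ 2) ^ 2 = 1 + r ^ 2 := sq_sqrt (by positivity)
  refine eq_inv_of_mul_eq_one_left ?_
  linear_combination hsq

theorem self_le_sqrt_one_add_sq (r : ℝ) : r ≤ √(1 + r ^ 2) :=
  le_sqrt_of_sq_le (by linarith)

theorem isBigO_sqrt_one_add_sq_sub_self :
    (fun r => √(1 + r ^ 2) - r) =O[atTop] (· ^ (-1 : ℝ)) := by
  refine (isBigO_inv_rpow_neg one_pos ?_).congr_left fun r =>
    (sqrt_one_add_sq_sub_self r).symm
  filter_upwards [eventually_ge_atTop 0] with r hr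
  rw [rpow_one, one_mul]
  linarith [self_le_sqrt_one_add_sq r]

theorem isBigO_sqrt_one_add_sq : (fun r => √(1 + r ^ 2)) =O[atTop] (· ^ (1 : ℝ)) :=
  isBigO_sqrt_one_add_sq_sub_self.of_isBigO_sub
    ((isBigO_pow_rpow 1 (by norm_num)).congr_left fun r => pow_one r) (by norm_num)

theorem isBigO_inv_sqrt_one_add_sq :
    (fun r => (√(1 + r ^ 2))⁻¹) =O[atTop] (· ^ (-1 : ℝ)) :=
  isBigO_inv_rpow_neg one_pos (.of_forall fun r => by
    rw [rpow_one, one_mul]; exact self_le_sqrt_one_add_sq r)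

theorem isBigO_inv_one_add_sq : (fun r : ℝ => (1 + r ^ 2)⁻¹) =O[atTop] (· ^ (-2 : ℝ)) :=
  isBigO_inv_rpow_neg one_pos (.of_forall fun r => by norm_num)

theorem isBigO_one_add_sq_rpow_neg_three_halves :
    (fun r : ℝ => (1 + r ^ 2) ^ (-(3 : ℝ) / 2)) =O[atTop] (· ^ (-3 : ℝ)) := by
  refine (isBigO_inv_rpow_neg one_pos ?_).congr_left fun r => by
    rw [neg_div, rpow_neg (by positivity)]
  filter_upwards [eventually_ge_atTop 0] with r hr
  calc 1 * r ^ (3 : ℝ) = (r ^ 2) ^ ((3 : ℝ) / 2) := by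
        rw [one_mul, ← rpow_natCast, ← rpow_mul hr]; norm_num
    _ ≤ (1 + r ^ 2) ^ ((3 : ℝ) / 2) := by gcongr; linarith

theorem isBigO_div_sqrt_one_add_sq_sub_one :
    (fun r => r / √(1 + r ^ 2) - 1) =O[atTop] (· ^ (-2 : ℝ)) := by
  refine ((isBigO_sqrt_one_add_sq_sub_self.mul_atTop_rpow_of_isBigO_rpow _ _ _
    isBigO_inv_sqrt_one_add_sq (by norm_num)).neg_left).congr_left fun r => ?_
  have : √(1 + r ^ 2) ≠ 0 := (sqrt_pos.2 (by positivity)).ne'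
  simp only [Pi.mul_apply]
  field_simp
  ring

theorem isBigO_div_one_add_sq_sub_inv :
    (fun r : ℝ => r / (1 + r ^ 2) - r⁻¹) =O[atTop] (· ^ (-3 : ℝ)) := by
  refine (((isBigO_const_div_pow 1 1 le_rfl).mul_atTop_rpow_of_isBigO_rpow _ _ _
    isBigO_inv_one_add_sq (by norm_num)).neg_left).congr' ?_ .rfl
  filter_upwards [eventually_gt_atTop 0] with r hr
  simp only [Pi.mul_apply]
  field_simp
  ring

theorem isBigO_inv_one_add_sq_sub_inv_sq :
    (fun r : ℝ => (1 + r ^ 2)⁻¹ - 1 / r ^ 2) =O[atTop] (· ^ (-4 : ℝ)) := by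
  refine (((isBigO_const_div_pow 1 2 le_rfl).mul_atTop_rpow_of_isBigO_rpow _ _ _
    isBigO_inv_one_add_sq (by norm_num)).neg_left).congr' ?_ .rfl
  filter_upwards [eventually_gt_atTop 0] with r hr
  simp only [Pi.mul_apply]
  field_simp
  ring

noncomputable def jangD (u f' V : ℝ → ℝ) (r : ℝ) : ℝ :=
  √(1 + u r ^ 2 * ((1 + r ^ 2) * f' r ^ 2 + V r))

noncomputable def jangPi (u u' f' f'' V : ℝ → ℝ) (r : ℝ) : ℝ :=
  (u r * (f'' r + (r / (1 + r ^ 2)) * f' r) + 2 * u' r * f' r) / jangD u f' V r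

section JangExpansions

variable {u₀ 𝒜 ε : ℝ} {u u' f' f'' V : ℝ → ℝ}

theorem deriv_sub_one_add_div_isBigO (hε : 0 ≤ ε)
    (hf' : (fun r => f' r - (r / √(1 + r ^ 2) + 𝒜 / r)) =O[atTop] (· ^ (-2 + ε))) :
    (fun r => f' r - (1 + 𝒜 / r)) =O[atTop] (· ^ (-2 + ε)) :=
  (hf'.add (isBigO_div_sqrt_one_add_sq_sub_one.trans_rpow_le (by linarith))).congr_left
    fun r => by ring

theorem sqrt_mul_deriv_sub_isBigO (hε : 0 ≤ ε)
    (hf : (fun r => f' r - (1 + 𝒜 / r)) =O[atTop] (· ^ (-2 + ε))) :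
    (fun r => √(1 + r ^ 2) * f' r - (r + 𝒜)) =O[atTop] (· ^ (-1 + ε)) := by
  refine ((isBigO_sqrt_one_add_sq.mul_atTop_rpow_of_isBigO_rpow _ _ _ hf (by linarith)).add
    (isBigO_sqrt_one_add_sq_sub_self.mul_atTop_rpow_of_isBigO_rpow _ _ _
      (isBigO_one_add_const_div 𝒜) (by linarith))).congr' ?_ .rfl
  filter_upwards [eventually_gt_atTop 0] with r hr
  simp only [Pi.mul_apply]
  field_simp
  ring

theorem warped_sqrt_mul_deriv_sub_isBigO (hε₀ : 0 ≤ ε) (hε₁ : ε ≤ 1)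
    (hu : (fun r => u r - (1 + u₀ / r)) =O[atTop] (· ^ (-2 + ε)))
    (hsf : (fun r => √(1 + r ^ 2) * f' r - (r + 𝒜)) =O[atTop] (· ^ (-1 + ε))) :
    (fun r => u r * (√(1 + r ^ 2) * f' r) - (r + (𝒜 + u₀))) =O[atTop] (· ^ (-1 + ε)) := by
  have hsf_le : (fun r => √(1 + r ^ 2) * f' r) =O[atTop] (· ^ (1 : ℝ)) :=
    hsf.of_isBigO_sub (isBigO_id_add_const 𝒜) (by linarith)
  refine (((hu.mul_atTop_rpow_of_isBigO_rpow _ _ _ hsf_le (by linarith)).add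
    ((isBigO_one_add_const_div u₀).mul_atTop_rpow_of_isBigO_rpow _ _ _ hsf (by linarith))).add
    (isBigO_const_div_pow (u₀ * 𝒜) 1 (by push_cast; linarith))).congr' ?_ .rfl
  filter_upwards [eventually_gt_atTop 0] with r hr
  simp only [Pi.mul_apply]
  field_simp
  ring

theorem jangRadicand_sub_isBigO (hε₀ : 0 ≤ ε) (hε₁ : ε ≤ 1)
    (hu : (fun r => u r - (1 + u₀ / r)) =O[atTop] (· ^ (-2 + ε)))
    (hw : (fun r => u r * (√(1 + r ^ 2) * f' r) - (r + (𝒜 + u₀))) =O[atTop] (· ^ (-1 + ε)))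
    (hV : V =O[atTop] (· ^ ε)) :
    (fun r => 1 + u r ^ 2 * ((1 + r ^ 2) * f' r ^ 2 + V r) - (r + (𝒜 + u₀)) ^ 2)
      =O[atTop] (· ^ ε) := by
  have hu_le : u =O[atTop] (· ^ (0 : ℝ)) :=
    hu.of_isBigO_sub (isBigO_one_add_const_div u₀) (by linarith)
  have hw_add : (fun r => u r * (√(1 + r ^ 2) * f' r) + (r + (𝒜 + u₀)))
      =O[atTop] (· ^ (1 : ℝ)) :=
    ((hw.trans_rpow_le (by linarith)).add ((isBigO_id_add_const (𝒜 + u₀)).const_mul_left 2))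
      |>.congr_left fun r => by ring
  refine (((isBigO_const_rpow 1 hε₀).add
    (hw.mul_atTop_rpow_of_isBigO_rpow _ _ _ hw_add (by linarith))).add
    ((hu_le.mul_atTop_rpow_of_isBigO_rpow _ _ _ hu_le le_rfl).mul_atTop_rpow_of_isBigO_rpow _ _ _
      hV (by linarith))).congr_left fun r => ?_
  have hs : √(1 + r ^ 2) ^ 2 = 1 + r ^ 2 := sq_sqrt (by positivity)
  simp only [Pi.mul_apply]
  linear_combination (u r ^ 2 * f' r ^ 2) * hs

theorem eventually_half_le_jangD (hε₁ : ε ≤ 1)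
    (hA : (fun r => 1 + u r ^ 2 * ((1 + r ^ 2) * f' r ^ 2 + V r) - (r + (𝒜 + u₀)) ^ 2)
      =O[atTop] (· ^ ε)) :
    ∀ᶠ r in atTop, r / 2 ≤ jangD u f' V r :=
  eventually_half_le_sqrt (A := fun r => 1 + u r ^ 2 * ((1 + r ^ 2) * f' r ^ 2 + V r))
    <| ((hA.trans_rpow_le hε₁).add
    ((((isBigO_pow_rpow 1 (by norm_num)).const_mul_left (2 * (𝒜 + u₀))).add
      (isBigO_const_rpow ((𝒜 + u₀) ^ 2) zero_le_one)))).congr_left fun r => by ring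

theorem jangD_sub_isBigO
    (hA : (fun r => 1 + u r ^ 2 * ((1 + r ^ 2) * f' r ^ 2 + V r) - (r + (𝒜 + u₀)) ^ 2)
      =O[atTop] (· ^ ε))
    (hD : ∀ᶠ r in atTop, r / 2 ≤ jangD u f' V r) :
    (fun r => jangD u f' V r - (r + (𝒜 + u₀))) =O[atTop] (· ^ (-1 + ε)) := by
  have hsum : ∀ᶠ r in atTop, (1 / 2) * r ^ (1 : ℝ) ≤ jangD u f' V r + (r + (𝒜 + u₀)) := by
    filter_upwards [hD, eventually_ge_atTop (-(𝒜 + u₀))] with r hDr hr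
    rw [rpow_one]
    linarith
  refine (hA.mul_atTop_rpow_of_isBigO_rpow _ _ _ (isBigO_inv_rpow_neg one_half_pos hsum)
    (by linarith)).congr' ?_ .rfl
  filter_upwards [hD, hsum, eventually_gt_atTop 0] with r hDr hsumr hr
  have hpos : 0 < jangD u f' V r + (r + (𝒜 + u₀)) := by
    rw [rpow_one] at hsumr
    linarith
  have hsq : jangD u f' V r ^ 2 = 1 + u r ^ 2 * ((1 + r ^ 2) * f' r ^ 2 + V r) :=
    sq_sqrt (sqrt_pos.1 (show 0 < jangD u f' V r by linarith)).le
  simp only [Pi.mul_apply]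
  field_simp
  linear_combination -hsq

theorem second_deriv_add_sub_inv_isBigO (hε₀ : 0 ≤ ε) (hε₁ : ε ≤ 1)
    (hf : (fun r => f' r - (1 + 𝒜 / r)) =O[atTop] (· ^ (-2 + ε)))
    (hf'' : (fun r => f'' r - ((1 + r ^ 2) ^ (-(3 : ℝ) / 2) - 𝒜 / r ^ 2))
      =O[atTop] (· ^ (-3 + ε))) :
    (fun r => f'' r + (r / (1 + r ^ 2)) * f' r - r⁻¹) =O[atTop] (· ^ (-3 + ε)) := by
  have hf_le : f' =O[atTop] (· ^ (0 : ℝ)) :=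
    hf.of_isBigO_sub (isBigO_one_add_const_div 𝒜) (by linarith)
  refine (((hf''.add (isBigO_one_add_sq_rpow_neg_three_halves.trans_rpow_le (by linarith))).add
    (isBigO_div_one_add_sq_sub_inv.mul_atTop_rpow_of_isBigO_rpow _ _ _ hf_le
      (by linarith))).add
    (hf.mul_atTop_rpow_of_isBigO_rpow _ _ _ (isBigO_const_div_pow 1 1 le_rfl)
      (by push_cast; linarith))).congr' ?_ .rfl
  filter_upwards [eventually_gt_atTop 0] with r hr
  simp only [Pi.mul_apply]
  field_simp
  ring

theorem jangPiNumerator_sub_isBigO (hε₀ : 0 ≤ ε) (hε₁ : ε ≤ 1)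
    (hu : (fun r => u r - (1 + u₀ / r)) =O[atTop] (· ^ (-2 + ε)))
    (hu' : (fun r => u' r - (-u₀ / r ^ 2)) =O[atTop] (· ^ (-3 + ε)))
    (hf : (fun r => f' r - (1 + 𝒜 / r)) =O[atTop] (· ^ (-2 + ε)))
    (hW : (fun r => f'' r + (r / (1 + r ^ 2)) * f' r - r⁻¹) =O[atTop] (· ^ (-3 + ε))) :
    (fun r => u r * (f'' r + (r / (1 + r ^ 2)) * f' r) + 2 * u' r * f' r - (r⁻¹ - u₀ / r ^ 2))
      =O[atTop] (· ^ (-3 + ε)) := by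
  have hu_le : u =O[atTop] (· ^ (0 : ℝ)) :=
    hu.of_isBigO_sub (isBigO_one_add_const_div u₀) (by linarith)
  have hf_le : f' =O[atTop] (· ^ (0 : ℝ)) :=
    hf.of_isBigO_sub (isBigO_one_add_const_div 𝒜) (by linarith)
  refine ((((hu_le.mul_atTop_rpow_of_isBigO_rpow _ _ _ hW (by linarith)).add
    (hu.mul_atTop_rpow_of_isBigO_rpow _ _ _ (isBigO_const_div_pow 1 1 le_rfl)
      (by push_cast; linarith))).add
    ((hu'.mul_atTop_rpow_of_isBigO_rpow _ _ _ hf_le (by linarith)).const_mul_left 2)).sub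
    (((isBigO_const_div_pow (2 * u₀) 2 le_rfl).mul_atTop_rpow_of_isBigO_rpow _ _ _ hf
      (by push_cast; linarith)).add
      (isBigO_const_div_pow (2 * u₀ * 𝒜) 3 (by push_cast; linarith)))).congr' ?_ .rfl
  filter_upwards [eventually_gt_atTop 0] with r hr
  simp only [Pi.mul_apply]
  field_simp
  ring

theorem jangD_inv_isBigO (hD_ge : ∀ᶠ r in atTop, r / 2 ≤ jangD u f' V r) :
    (fun r => (jangD u f' V r)⁻¹) =O[atTop] (· ^ (-1 : ℝ)) :=
  isBigO_inv_rpow_neg one_half_pos <| hD_ge.mono fun r hr => by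
    rwa [rpow_one, one_div_mul_eq_div]

theorem jangPi_sub_isBigO (hε₀ : 0 ≤ ε)
    (hN : (fun r => u r * (f'' r + (r / (1 + r ^ 2)) * f' r) + 2 * u' r * f' r -
      (r⁻¹ - u₀ / r ^ 2)) =O[atTop] (· ^ (-3 + ε)))
    (hD : (fun r => jangD u f' V r - (r + (𝒜 + u₀))) =O[atTop] (· ^ (-1 + ε)))
    (hD_ge : ∀ᶠ r in atTop, r / 2 ≤ jangD u f' V r) :
    (fun r => jangPi u u' f' f'' V r - (1 / r ^ 2 - (2 * u₀ + 𝒜) / r ^ 3))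
      =O[atTop] (· ^ (-4 + ε)) := by
  have hM : (fun r : ℝ => 1 / r ^ 2 - (2 * u₀ + 𝒜) / r ^ 3) =O[atTop] (· ^ (-2 : ℝ)) :=
    (isBigO_const_div_pow 1 2 le_rfl).sub (isBigO_const_div_pow _ 3 (by norm_num))
  -- with `a = 𝒜 + u₀`, `b = 2u₀ + 𝒜`, `M = 1/r² - b/r³`:
  -- `π - M = (N - M (r + a) - M (D - (r + a))) / D` and `M (r + a) = 1/r - u₀/r² - a b/r³`
  refine (((hN.add (isBigO_const_div_pow ((𝒜 + u₀) * (2 * u₀ + 𝒜)) 3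
    (by push_cast; linarith))).sub
    (hM.mul_atTop_rpow_of_isBigO_rpow _ _ _ hD (by linarith))).mul_atTop_rpow_of_isBigO_rpow
      _ _ _ (jangD_inv_isBigO hD_ge) (by linarith)).congr' ?_ .rfl
  filter_upwards [hD_ge, eventually_gt_atTop 0] with r hDr hr
  have hD_pos : 0 < jangD u f' V r := by linarith
  simp only [Pi.mul_apply, jangPi]
  field_simp
  ring

theorem jangPi_sub_add_isBigO (hε₀ : 0 ≤ ε) {k : ℝ → ℝ}
    (hπ : (fun r => jangPi u u' f' f'' V r - (1 / r ^ 2 - (2 * u₀ + 𝒜) / r ^ 3))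
      =O[atTop] (· ^ (-4 + ε)))
    (hk : (fun r => k r - (1 + r ^ 2)⁻¹) =O[atTop] (· ^ (-5 : ℝ))) :
    (fun r => jangPi u u' f' f'' V r - k r + (2 * u₀ + 𝒜) / r ^ 3)
      =O[atTop] (· ^ (-4 + ε)) :=
  ((hπ.sub (hk.trans_rpow_le (by linarith))).sub
    (isBigO_inv_one_add_sq_sub_inv_sq.trans_rpow_le (by linarith))).congr_left fun r => by ring

theorem jang_prefactor_sub_isBigO (hε₀ : 0 ≤ ε) {mR : ℝ} {G : ℝ → ℝ}
    (hG : (fun r => G r - ((1 + r ^ 2) - mR / r)) =O[atTop] (· ^ (-2 : ℝ)))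
    (hw : (fun r => u r * (√(1 + r ^ 2) * f' r) - (r + (𝒜 + u₀))) =O[atTop] (· ^ (-1 + ε)))
    (hD : (fun r => jangD u f' V r - (r + (𝒜 + u₀))) =O[atTop] (· ^ (-1 + ε)))
    (hD_ge : ∀ᶠ r in atTop, r / 2 ≤ jangD u f' V r) :
    (fun r => u r * G r * f' r * √(1 + r ^ 2) * (jangD u f' V r)⁻¹ - r ^ 2)
      =O[atTop] (· ^ ε) := by
  have hG_sub : (fun r => G r - r ^ 2) =O[atTop] (· ^ (0 : ℝ)) :=
    ((hG.trans_rpow_le (by norm_num)).add (isBigO_one_add_const_div (-mR))).congr_left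
      fun r => by ring
  have hG_le : G =O[atTop] (· ^ (2 : ℝ)) :=
    hG_sub.of_isBigO_sub (isBigO_pow_rpow 2 le_rfl) (by norm_num)
  -- `u G f' s / D - r² = G (u s f' - D) / D + (G - r²)`
  refine ((hG_le.mul_atTop_rpow_of_isBigO_rpow _ _ _ (hw.sub hD) le_rfl)
    |>.mul_atTop_rpow_of_isBigO_rpow _ _ _ (jangD_inv_isBigO hD_ge) (by linarith)
    |>.add (hG_sub.trans_rpow_le hε₀)).congr' ?_ .rfl
  filter_upwards [hD_ge, eventually_gt_atTop 0] with r hDr hr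
  have hD_pos : 0 < jangD u f' V r := by linarith
  simp only [Pi.mul_apply]
  field_simp
  ring

end JangExpansions

theorem stmt_8_general (u₀ 𝒜 mR ε : ℝ) (hε : ε ∈ Set.Ioo (0 : ℝ) 1)
    (u u' f' f'' V G k : ℝ → ℝ)
    (hu : ∃ C R, ∀ r ≥ R, |u r - (1 + u₀ / r)| ≤ C * r ^ (-2 + ε))
    (hu' : ∃ C R, ∀ r ≥ R, |u' r - (-u₀ / r ^ 2)| ≤ C * r ^ (-3 + ε))
    (hf' : ∃ C R, ∀ r ≥ R,
      |f' r - (r / Real.sqrt (1 + r ^ 2) + 𝒜 / r)| ≤ C * r ^ (-2 + ε))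
    (hf'' : ∃ C R, ∀ r ≥ R,
      |f'' r - ((1 + r ^ 2) ^ (-(3 : ℝ) / 2) - 𝒜 / r ^ 2)| ≤ C * r ^ (-3 + ε))
    (hV : ∃ C R, ∀ r ≥ R, |V r| ≤ C * r ^ ε)
    (hG : ∃ C R, ∀ r ≥ R, |G r - ((1 + r ^ 2) - mR / r)| ≤ C * r ^ (-2 : ℝ))
    (hk : ∃ C R, ∀ r ≥ R, |k r - (1 + r ^ 2)⁻¹| ≤ C * r ^ (-5 : ℝ)) :
    ∃ C R, ∀ r ≥ R,
      |u r * G r * f' r * Real.sqrt (1 + r ^ 2) *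
          (Real.sqrt (1 + u r ^ 2 * ((1 + r ^ 2) * f' r ^ 2 + V r)))⁻¹ *
          ((u r * (f'' r + (r / (1 + r ^ 2)) * f' r) + 2 * u' r * f' r) /
              Real.sqrt (1 + u r ^ 2 * ((1 + r ^ 2) * f' r ^ 2 + V r)) -
            k r) -
        (-(2 * u₀ + 𝒜) / r)| ≤ C * r ^ (-2 + ε) := by
  obtain ⟨hε₀, hε₁⟩ := hε
  simp only [← isBigO_rpow_atTop_iff_exists_bound] at hu hu' hf' hf'' hV hG hk ⊢
  have hf := deriv_sub_one_add_div_isBigO hε₀.le hf'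
  have hw := warped_sqrt_mul_deriv_sub_isBigO hε₀.le hε₁.le hu
    (sqrt_mul_deriv_sub_isBigO hε₀.le hf)
  have hA := jangRadicand_sub_isBigO hε₀.le hε₁.le hu hw hV
  have hD_ge := eventually_half_le_jangD hε₁.le hA
  have hD := jangD_sub_isBigO hA hD_ge
  have hN := jangPiNumerator_sub_isBigO hε₀.le hε₁.le hu hu' hf
    (second_deriv_add_sub_inv_isBigO hε₀.le hε₁.le hf hf'')
  have hπk := jangPi_sub_add_isBigO hε₀.le (jangPi_sub_isBigO hε₀.le hN hD hD_ge) hk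
  have hπk_le : (fun r => jangPi u u' f' f'' V r - k r) =O[atTop] (· ^ (-3 : ℝ)) :=
    ((hπk.trans_rpow_le (by linarith)).sub
      (isBigO_const_div_pow (2 * u₀ + 𝒜) 3 (by norm_num))).congr_left fun r => by ring
  have hP := jang_prefactor_sub_isBigO hε₀.le hG hw hD hD_ge
  -- with `P` the prefactor and `b = 2u₀ + 𝒜`:
  -- `P (π - k) + b/r = (P - r²) (π - k) + r² (π - k + b/r³)`
  refine ((hP.mul_atTop_rpow_of_isBigO_rpow _ _ _ hπk_le (by linarith)).add
    ((isBigO_pow_rpow 2 (p := 2) (by norm_num)).mul_atTop_rpow_of_isBigO_rpow _ _ _ hπk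
      (by linarith))).congr' ?_ .rfl
  filter_upwards [eventually_gt_atTop 0] with r hr
  simp only [Pi.mul_apply, jangPi, jangD]
  field_simp
  ring

/-- The key pointwise computation (010) of Lemma 10.1:
u·g^{rr}·f′·√(1+r²)·D⁻¹·(π_rr − k_rr) = −(2u₀ + 𝒜)/r + O(r^{−2+ε}),
where D = (1 + u²((1+r²)f′² + V))^{1/2} and
π = [u(f″ + (r/(1+r²))f′) + 2u′f′]/D. -/
theorem stmt_8 (u₀ 𝒜 mR ε r₀ : ℝ) (hε : ε ∈ Set.Ioo (0 : ℝ) 1) (hr₀ : 0 < r₀)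
    (u u' f f' f'' V G k : ℝ → ℝ)
    (hud : ∀ r ≥ r₀, HasDerivAt u (u' r) r)
    (hfd : ∀ r ≥ r₀, HasDerivAt f (f' r) r)
    (hfd' : ∀ r ≥ r₀, HasDerivAt f' (f'' r) r)
    (hu : ∃ C R, ∀ r ≥ R, |u r - (1 + u₀ / r)| ≤ C * r ^ (-2 + ε))
    (hu' : ∃ C R, ∀ r ≥ R, |u' r - (-u₀ / r ^ 2)| ≤ C * r ^ (-3 + ε))
    (hf' : ∃ C R, ∀ r ≥ R,
      |f' r - (r / Real.sqrt (1 + r ^ 2) + 𝒜 / r)| ≤ C * r ^ (-2 + ε))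
    (hf'' : ∃ C R, ∀ r ≥ R,
      |f'' r - ((1 + r ^ 2) ^ (-(3 : ℝ) / 2) - 𝒜 / r ^ 2)| ≤ C * r ^ (-3 + ε))
    (hV : ∃ C R, ∀ r ≥ R, |V r| ≤ C * r ^ ε)
    (hG : ∃ C R, ∀ r ≥ R, |G r - ((1 + r ^ 2) - mR / r)| ≤ C * r ^ (-2 : ℝ))
    (hk : ∃ C R, ∀ r ≥ R, |k r - (1 + r ^ 2)⁻¹| ≤ C * r ^ (-5 : ℝ)) :
    ∃ C R, ∀ r ≥ R,
      |u r * G r * f' r * Real.sqrt (1 + r ^ 2) *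
          (Real.sqrt (1 + u r ^ 2 * ((1 + r ^ 2) * f' r ^ 2 + V r)))⁻¹ *
          ((u r * (f'' r + (r / (1 + r ^ 2)) * f' r) + 2 * u' r * f' r) /
              Real.sqrt (1 + u r ^ 2 * ((1 + r ^ 2) * f' r ^ 2 + V r)) -
            k r) -
        (-(2 * u₀ + 𝒜) / r)| ≤ C * r ^ (-2 + ε) :=
  stmt_8_general u₀ 𝒜 mR ε hε u u' f' f'' V G k hu hu' hf' hf'' hV hG hk
end

section
/- Let 𝒜, 𝓑, C₁, D₁, D₂, 𝐦 ∈ ℝ and r₀ > 0. Define f₀(r) = √(1 + r²) + 𝒜 log r + 𝓑 + D₁/r + D₂/r² for r ≥ r₀. Suppose G : [r₀, ∞) → ℝ satisfies G(r) = (1 + r²) − 𝐦/r + O(r^{−2}) and H : [r₀, ∞) → ℝ satisfies H(r) = 1 − 2C₁/r + O(r^{−2}) as r → ∞. Then √(G(r) f₀′(r)² + H(r)) = r + 𝒜 + (1 − 2D₁)/(2r) − (2C₁ + 4D₂ + 𝐦)/(2r²) + O(r^{−3}) as r → ∞. -/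
open Filter Asymptotics

/-! Write `φ = f₀'`, `Q = G φ² + H` and let `P` be the claimed expansion. Since `P ≍ r`,
`|√Q - P| ≤ |Q - P²| / P`, so it suffices that `Q - P² = O(r⁻²)`. Expanding
`r / √(1 + r²) = 1 - 1/(2r²) + O(r⁻⁴)` reduces this to a Laurent polynomial identity in which the
coefficients of `r²`, `r`, `1` and `r⁻¹` cancel; that cancellation is what fixes the coefficients
of `P`. -/

theorem isBigO_zpow_iff_exists_bound {f : ℝ → ℝ} {n : ℤ} :
    f =O[atTop] (fun r => r ^ n) ↔ ∃ C R, ∀ r ≥ R, |f r| ≤ C * r ^ (n : ℝ) := by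
  refine isBigO_iff.trans (exists_congr fun C => ?_)
  rw [← eventually_atTop]
  refine eventually_congr ((eventually_gt_atTop 0).mono fun r hr => ?_)
  rw [Real.norm_eq_abs, norm_zpow, Real.norm_eq_abs, abs_of_pos hr, Real.rpow_intCast]

theorem isBigO_zpow_zpow_atTop_of_le {m n : ℤ} (h : m ≤ n) :
    (fun r : ℝ => r ^ m) =O[atTop] fun r => r ^ n := by
  refine IsBigO.of_bound 1 ((eventually_ge_atTop 1).mono fun r hr => ?_)
  rw [Real.norm_eq_abs, Real.norm_eq_abs, one_mul, abs_of_pos (zpow_pos (by linarith) _),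
    abs_of_pos (zpow_pos (by linarith) _)]
  exact zpow_le_zpow_right₀ hr h

theorem Asymptotics.IsBigO.mul_zpow {f g : ℝ → ℝ} {m n k : ℤ}
    (hf : f =O[atTop] fun r => r ^ m) (hg : g =O[atTop] fun r => r ^ n) (hk : m + n = k) :
    (fun r => f r * g r) =O[atTop] fun r => r ^ k := by
  subst hk
  exact (hf.mul hg).congr' EventuallyEq.rfl
    ((eventually_ne_atTop 0).mono fun r hr => (zpow_add₀ hr m n).symm)

theorem isBigO_zpow_of_eventuallyEq_zpow_mul {f E : ℝ → ℝ} (n : ℤ) (hE : ContinuousAt E 0)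
    (hf : ∀ᶠ r in atTop, f r = r ^ n * E r⁻¹) : f =O[atTop] fun r => r ^ n := by
  have hE' : (fun r : ℝ => E r⁻¹) =O[atTop] fun _ => (1 : ℝ) :=
    (hE.tendsto.comp tendsto_inv_atTop_zero).isBigO_one ℝ
  refine ((isBigO_refl (fun r : ℝ => r ^ n) atTop).mul hE').congr' ?_ (by simp)
  exact hf.mono fun r hr => hr.symm

theorem eventually_pos_of_eventuallyEq_zpow_mul {f E : ℝ → ℝ} (n : ℤ) (hE : ContinuousAt E 0)
    (hE₀ : 0 < E 0) (hf : ∀ᶠ r in atTop, f r = r ^ n * E r⁻¹) : ∀ᶠ r in atTop, 0 < f r := by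
  have hEpos : ∀ᶠ r in atTop, 0 < E r⁻¹ :=
    (hE.tendsto.comp tendsto_inv_atTop_zero).eventually (lt_mem_nhds hE₀)
  filter_upwards [hf, hEpos, eventually_gt_atTop 0] with r hfr hEr hr
  rw [hfr]
  exact mul_pos (zpow_pos hr n) hEr

theorem isBigO_inv_zpow_of_eventuallyEq_zpow_mul {f E : ℝ → ℝ} (n : ℤ) (hE : ContinuousAt E 0)
    (hE₀ : E 0 ≠ 0) (hf : ∀ᶠ r in atTop, f r = r ^ n * E r⁻¹) :
    (fun r => (f r)⁻¹) =O[atTop] fun r => r ^ (-n) := by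
  refine isBigO_zpow_of_eventuallyEq_zpow_mul (-n) (hE.inv₀ hE₀) (hf.mono fun r hr => ?_)
  rw [hr, mul_inv, zpow_neg]
  rfl

theorem Real.abs_sqrt_sub_le {p : ℝ} (q : ℝ) (hp : 0 < p) :
    |√q - p| ≤ |q - p ^ 2| / p := by
  rw [le_div_iff₀ hp]
  have hsq : |√q ^ 2 - p ^ 2| ≤ |q - p ^ 2| := by
    rcases le_or_gt 0 q with hq | hq
    · rw [Real.sq_sqrt hq]
    · rw [Real.sqrt_eq_zero'.2 hq.le, abs_of_neg (by nlinarith), abs_of_neg (by nlinarith)]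
      linarith
  have hsum : 0 < √q + p := by positivity
  calc |√q - p| * p ≤ |√q - p| * (√q + p) := by gcongr; linarith [Real.sqrt_nonneg q]
    _ = |√q ^ 2 - p ^ 2| := by rw [← abs_of_pos hsum, ← abs_mul]; ring_nf
    _ ≤ |q - p ^ 2| := hsq

theorem Asymptotics.IsBigO.sqrt_sub {α : Type*} {l : Filter α} {Q P g₁ g₂ : α → ℝ}
    (hQ : (fun x => Q x - P x ^ 2) =O[l] g₁) (hP : ∀ᶠ x in l, 0 < P x)
    (hPinv : (fun x => (P x)⁻¹) =O[l] g₂) :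
    (fun x => √(Q x) - P x) =O[l] fun x => g₁ x * g₂ x := by
  refine IsBigO.trans ?_ (hQ.mul hPinv)
  refine IsBigO.of_bound 1 (hP.mono fun x hx => ?_)
  rw [Real.norm_eq_abs, Real.norm_eq_abs, one_mul, abs_mul, abs_inv, abs_of_pos hx]
  exact Real.abs_sqrt_sub_le _ hx

theorem isBigO_div_sqrt_one_add_sq_sub :
    (fun r : ℝ => r / √(1 + r ^ 2) - (1 - 1 / (2 * r ^ 2))) =O[atTop] fun r => r ^ (-4 : ℤ) := by
  obtain ⟨E, hE, hE₀, hP⟩ : ∃ E : ℝ → ℝ, ContinuousAt E 0 ∧ 0 < E 0 ∧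
      ∀ᶠ r : ℝ in atTop, 1 - 1 / (2 * r ^ 2) = r ^ (0 : ℤ) * E r⁻¹ :=
    ⟨fun u => 1 - u ^ 2 / 2, by fun_prop, by norm_num,
      Eventually.of_forall fun r => by field_simp⟩
  have hQ : (fun r : ℝ => r ^ 2 / (1 + r ^ 2) - (1 - 1 / (2 * r ^ 2)) ^ 2)
      =O[atTop] fun r => r ^ (-4 : ℤ) := by
    refine isBigO_zpow_of_eventuallyEq_zpow_mul (-4)
      (E := fun u => (3 - u ^ 2) / (4 * (1 + u ^ 2))) (by fun_prop (disch := positivity))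
      ((eventually_ne_atTop 0).mono fun r hr => ?_)
    simp only [zpow_neg, zpow_ofNat]
    field_simp
    ring
  have hsqrt := hQ.sqrt_sub (eventually_pos_of_eventuallyEq_zpow_mul 0 hE hE₀ hP)
    (isBigO_inv_zpow_of_eventuallyEq_zpow_mul 0 hE hE₀.ne' hP)
  refine hsqrt.congr' ((eventually_gt_atTop 0).mono fun r hr => ?_) (by simp)
  dsimp only
  rw [Real.sqrt_div (sq_nonneg r), Real.sqrt_sq hr.le]

noncomputable def jangApprox (𝒜 𝓑 D₁ D₂ : ℝ) (s : ℝ) : ℝ :=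
  √(1 + s ^ 2) + 𝒜 * Real.log s + 𝓑 + D₁ / s + D₂ / s ^ 2

noncomputable def jangApproxDeriv (𝒜 D₁ D₂ : ℝ) (r : ℝ) : ℝ :=
  r / √(1 + r ^ 2) + 𝒜 / r - D₁ / r ^ 2 - 2 * D₂ / r ^ 3

theorem hasDerivAt_jangApprox (𝒜 𝓑 D₁ D₂ : ℝ) {r : ℝ} (hr : 0 < r) :
    HasDerivAt (jangApprox 𝒜 𝓑 D₁ D₂) (jangApproxDeriv 𝒜 D₁ D₂ r) r := by
  have hsqrt : HasDerivAt (fun s : ℝ => √(1 + s ^ 2)) (2 * r / (2 * √(1 + r ^ 2))) r := by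
    simpa using ((hasDerivAt_pow 2 r).const_add 1).sqrt (by positivity)
  have := (((hsqrt.add ((Real.hasDerivAt_log hr.ne').const_mul 𝒜)).add_const 𝓑).add
    ((hasDerivAt_const r D₁).div (hasDerivAt_id' r) hr.ne')).add
    ((hasDerivAt_const r D₂).div (hasDerivAt_pow 2 r) (by positivity))
  refine this.congr_deriv ?_
  rw [jangApproxDeriv]
  field_simp
  ring

noncomputable def sqrtExpansion (𝒜 C₁ D₁ D₂ mR r : ℝ) : ℝ :=
  r + 𝒜 + (1 - 2 * D₁) / (2 * r) - (2 * C₁ + 4 * D₂ + mR) / (2 * r ^ 2)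

theorem isBigO_sq_sub_sqrtExpansion_sq {𝒜 C₁ D₁ D₂ mR : ℝ} {G H : ℝ → ℝ}
    (hG : (fun r => G r - ((1 + r ^ 2) - mR / r)) =O[atTop] fun r => r ^ (-2 : ℤ))
    (hH : (fun r => H r - (1 - 2 * C₁ / r)) =O[atTop] fun r => r ^ (-2 : ℤ)) :
    (fun r => G r * jangApproxDeriv 𝒜 D₁ D₂ r ^ 2 + H r - sqrtExpansion 𝒜 C₁ D₁ D₂ mR r ^ 2)
      =O[atTop] fun r => r ^ (-2 : ℤ) := by
  set φ := jangApproxDeriv 𝒜 D₁ D₂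
  set φ₀ := fun r : ℝ => 1 + 𝒜 / r - (D₁ + 1 / 2) / r ^ 2 - 2 * D₂ / r ^ 3
  set G₀ := fun r : ℝ => (1 + r ^ 2) - mR / r
  have hφ₀ : φ₀ =O[atTop] fun r => r ^ (0 : ℤ) := by
    refine isBigO_zpow_of_eventuallyEq_zpow_mul 0
      (E := fun u => 1 + 𝒜 * u - (D₁ + 1 / 2) * u ^ 2 - 2 * D₂ * u ^ 3) (by fun_prop)
      (Eventually.of_forall fun r => ?_)
    simp only [φ₀, zpow_zero, one_mul]
    ring
  have hε : (fun r => φ r - φ₀ r) =O[atTop] fun r => r ^ (-4 : ℤ) :=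
    isBigO_div_sqrt_one_add_sq_sub.congr_left fun r => by
      simp only [φ, φ₀, jangApproxDeriv]; ring
  have hφ : φ =O[atTop] fun r => r ^ (0 : ℤ) :=
    ((hε.trans (isBigO_zpow_zpow_atTop_of_le (by norm_num))).add hφ₀).congr_left fun r => by ring
  have hG₀ : G₀ =O[atTop] fun r => r ^ (2 : ℤ) := by
    refine isBigO_zpow_of_eventuallyEq_zpow_mul 2 (E := fun u => 1 + u ^ 2 - mR * u ^ 3)
      (by fun_prop) ((eventually_ne_atTop 0).mono fun r hr => ?_)
    simp only [G₀, zpow_ofNat]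
    field_simp
    ring
  -- `r⁻²` times a polynomial in `u = r⁻¹`; the terms of order `r²`, `r`, `1`, `r⁻¹` have cancelled.
  have hR : (fun r => G₀ r * φ₀ r ^ 2 + (1 - 2 * C₁ / r) - sqrtExpansion 𝒜 C₁ D₁ D₂ mR r ^ 2)
      =O[atTop] fun r => r ^ (-2 : ℤ) := by
    refine isBigO_zpow_of_eventuallyEq_zpow_mul (-2) (E := fun u =>
        (𝒜 ^ 2 + 2 * 𝒜 * C₁ - mR * 𝒜 - 1)
        + (3 * mR / 2 - mR * 𝒜 ^ 2 + mR * D₁ - 𝒜 - 2 * 𝒜 * D₁ - 2 * D₁ * C₁ + C₁) * u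
        + (1 / 4 + mR * 𝒜 + 2 * mR * 𝒜 * D₁ + 2 * mR * D₂ - mR * C₁ - mR ^ 2 / 4 - 4 * 𝒜 * D₂
            + D₁ + D₁ ^ 2 - 4 * D₂ * C₁ - C₁ ^ 2) * u ^ 2
        + (-mR / 4 + 4 * mR * 𝒜 * D₂ - mR * D₁ - mR * D₁ ^ 2 + 4 * D₁ * D₂ + 2 * D₂) * u ^ 3
        + (4 * D₂ ^ 2 - 4 * mR * D₁ * D₂ - 2 * mR * D₂) * u ^ 4
        - 4 * mR * D₂ ^ 2 * u ^ 5)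
      (by fun_prop) ((eventually_ne_atTop 0).mono fun r hr => ?_)
    simp only [G₀, φ₀, sqrtExpansion, zpow_neg, zpow_ofNat]
    field_simp
    ring
  -- `Q - P² = (G - G₀) φ² + (H - H₀) + G₀ (φ - φ₀) (φ + φ₀) + (G₀ φ₀² + H₀ - P²)`
  have hsum := ((hG.mul_zpow (hφ.mul_zpow hφ rfl) rfl).add hH).add
    (((hG₀.mul_zpow hε rfl).mul_zpow (hφ.add hφ₀) rfl).add hR)
  refine hsum.congr_left fun r => ?_
  simp only [G₀]
  ring

theorem stmt_9_general (𝒜 𝓑 C₁ D₁ D₂ mR : ℝ)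
    (G H : ℝ → ℝ)
    (hG : ∃ C R, ∀ r ≥ R, |G r - ((1 + r ^ 2) - mR / r)| ≤ C * r ^ (-2 : ℝ))
    (hH : ∃ C R, ∀ r ≥ R, |H r - (1 - 2 * C₁ / r)| ≤ C * r ^ (-2 : ℝ)) :
    ∃ C R, ∀ r ≥ R,
      |Real.sqrt (G r *
          (deriv (fun s => Real.sqrt (1 + s ^ 2) + 𝒜 * Real.log s + 𝓑 +
            D₁ / s + D₂ / s ^ 2) r) ^ 2 + H r) -
        (r + 𝒜 + (1 - 2 * D₁) / (2 * r) -
          (2 * C₁ + 4 * D₂ + mR) / (2 * r ^ 2))| ≤ C * r ^ (-3 : ℝ) := by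
  obtain ⟨E, hE, hE₀, hP⟩ : ∃ E : ℝ → ℝ, ContinuousAt E 0 ∧ 0 < E 0 ∧
      ∀ᶠ r in atTop, sqrtExpansion 𝒜 C₁ D₁ D₂ mR r = r ^ (1 : ℤ) * E r⁻¹ :=
    ⟨fun u => 1 + 𝒜 * u + (1 - 2 * D₁) / 2 * u ^ 2 - (2 * C₁ + 4 * D₂ + mR) / 2 * u ^ 3,
      by fun_prop, by norm_num, (eventually_ne_atTop 0).mono fun r hr => by
        simp only [sqrtExpansion, zpow_one]; field_simp⟩
  have hQ := isBigO_sq_sub_sqrtExpansion_sq (𝒜 := 𝒜) (D₁ := D₁) (D₂ := D₂)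
    (isBigO_zpow_iff_exists_bound.2 (by exact_mod_cast hG))
    (isBigO_zpow_iff_exists_bound.2 (by exact_mod_cast hH))
  have hsqrt := hQ.sqrt_sub (eventually_pos_of_eventuallyEq_zpow_mul 1 hE hE₀ hP)
    (isBigO_inv_zpow_of_eventuallyEq_zpow_mul 1 hE hE₀.ne' hP)
  have hderiv : ∀ᶠ r in atTop, deriv (jangApprox 𝒜 𝓑 D₁ D₂) r = jangApproxDeriv 𝒜 D₁ D₂ r :=
    (eventually_gt_atTop 0).mono fun r hr => (hasDerivAt_jangApprox 𝒜 𝓑 D₁ D₂ hr).deriv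
  have hmain : (fun r => √(G r * deriv (jangApprox 𝒜 𝓑 D₁ D₂) r ^ 2 + H r)
      - sqrtExpansion 𝒜 C₁ D₁ D₂ mR r) =O[atTop] fun r => r ^ (-3 : ℤ) :=
    hsqrt.congr' (hderiv.mono fun r hr => by dsimp only; rw [hr])
      ((eventually_ne_atTop 0).mono fun r hr => (zpow_add₀ hr (-2) (-1)).symm)
  exact_mod_cast isBigO_zpow_iff_exists_bound.1 hmain

/-- Expansion (0018-3): √(g^{rr} f₀′² + H) = r + 𝒜 + (1 − 2D₁)/(2r)
− (2C₁ + 4D₂ + mR)/(2r²) + O(r^{−3}) for the approximate solution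
f₀ = √(1+r²) + 𝒜 log r + 𝓑 + D₁/r + D₂/r². -/
theorem stmt_9 (𝒜 𝓑 C₁ D₁ D₂ mR r₀ : ℝ) (hr₀ : 0 < r₀)
    (G H : ℝ → ℝ)
    (hG : ∃ C R, ∀ r ≥ R, |G r - ((1 + r ^ 2) - mR / r)| ≤ C * r ^ (-2 : ℝ))
    (hH : ∃ C R, ∀ r ≥ R, |H r - (1 - 2 * C₁ / r)| ≤ C * r ^ (-2 : ℝ)) :
    ∃ C R, ∀ r ≥ R,
      |Real.sqrt (G r *
          (deriv (fun s => Real.sqrt (1 + s ^ 2) + 𝒜 * Real.log s + 𝓑 +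
            D₁ / s + D₂ / s ^ 2) r) ^ 2 + H r) -
        (r + 𝒜 + (1 - 2 * D₁) / (2 * r) -
          (2 * C₁ + 4 * D₂ + mR) / (2 * r ^ 2))| ≤ C * r ^ (-3 : ℝ) :=
  stmt_9_general 𝒜 𝓑 C₁ D₁ D₂ mR G H hG hH
end

section
/- Let m, 𝒥, 𝒬, A be real numbers with A ≥ 4π √(𝒬⁴ + 4𝒥²) and m² ≥ (𝒬² + √(𝒬⁴ + 4𝒥²))/2. Then (m² − 𝒬²/2)² − 𝒬⁴/4 − 𝒥² ≥ 0 and A/(8π) ≥ m² − 𝒬²/2 − √((m² − 𝒬²/2)² − 𝒬⁴/4 − 𝒥²). -/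
open Real

/-
With x = m² − 𝒬²/2 and c = √(𝒬⁴ + 4𝒥²)/2 we have 𝒬⁴/4 + 𝒥² = c², and the two hypotheses read
c ≤ A/(8π) and c ≤ x. For 0 ≤ c ≤ x one has (x − c)² ≤ x² − c², hence x − √(x² − c²) ≤ c.
-/

theorem sub_sqrt_sq_sub_sq_le {x c : ℝ} (hc : 0 ≤ c) (hcx : c ≤ x) :
    x - √(x ^ 2 - c ^ 2) ≤ c := by
  have hsq : (x - c) ^ 2 ≤ x ^ 2 - c ^ 2 := by nlinarith
  linarith [le_abs_self (x - c), Real.abs_le_sqrt hsq]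

/-- Theorem 8.1: the lower bound for the area of black holes in terms of mass,
angular momentum, and charge follows from the area–angular momentum–charge
inequality and the mass–angular momentum–charge inequality. -/
theorem stmt_12 (m 𝒥 𝒬 A : ℝ)
    (hA : A ≥ 4 * π * Real.sqrt (𝒬 ^ 4 + 4 * 𝒥 ^ 2))
    (hm : m ^ 2 ≥ (𝒬 ^ 2 + Real.sqrt (𝒬 ^ 4 + 4 * 𝒥 ^ 2)) / 2) :
    (m ^ 2 - 𝒬 ^ 2 / 2) ^ 2 - 𝒬 ^ 4 / 4 - 𝒥 ^ 2 ≥ 0 ∧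
    A / (8 * π) ≥ m ^ 2 - 𝒬 ^ 2 / 2 -
      Real.sqrt ((m ^ 2 - 𝒬 ^ 2 / 2) ^ 2 - 𝒬 ^ 4 / 4 - 𝒥 ^ 2) := by
  set c := √(𝒬 ^ 4 + 4 * 𝒥 ^ 2) / 2 with hc_def
  have hc : 0 ≤ c := by positivity
  have hc_sq : 𝒬 ^ 4 / 4 + 𝒥 ^ 2 = c ^ 2 := by
    rw [hc_def, div_pow, Real.sq_sqrt (by positivity)]
    ring
  have hcx : c ≤ m ^ 2 - 𝒬 ^ 2 / 2 := by linarith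
  have hcA : c ≤ A / (8 * π) := by
    rw [le_div_iff₀ (by positivity), hc_def]
    linarith
  have hrad :
      (m ^ 2 - 𝒬 ^ 2 / 2) ^ 2 - 𝒬 ^ 4 / 4 - 𝒥 ^ 2 = (m ^ 2 - 𝒬 ^ 2 / 2) ^ 2 - c ^ 2 := by
    linarith
  rw [hrad]
  exact ⟨sub_nonneg.2 (pow_le_pow_left₀ hc hcx 2), (sub_sqrt_sq_sub_sq_le hc hcx).trans hcA⟩
end
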